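/- arXiv:2003.08705 — 3 statements merged into one kernel-verified Lean document; each statement's English description precedes it below -/
import Mathlib

section
/- There exists a single-qubit pure state ψ for which the 'classical' uncertainty relation ⟨e^{2σ_x}⟩⟨e^{2σ_y}⟩ ≥ |⟨e^{σ_x + σ_y}⟩|² fails. Concretely, for ψ = (|+⟩ + e^{iπ}|−⟩)/√2 (i.e., θ = π/2, φ = π), one has (cosh2 + cosφ sinθ sinh2)(cosh2 + sinφ sinθ sinh2) < (1/2)[√2 cosh√2 + sinθ(cosφ + sinφ) sinh√2]². -/
open Matrix NormedSpace


noncomputable def s2 : ℂ := (Real.sqrt 2 : ℝ)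

lemma s2_sq : s2 * s2 = 2 := by
  simp only [s2, ← Complex.ofReal_mul, Real.mul_self_sqrt (by norm_num : (2:ℝ) ≥ 0 )]
  norm_num

lemma s2_pow : s2 ^ 2 = 2 := by rw [pow_two]; exact s2_sq

lemma s2_ne : s2 ≠ 0 := by
  intro h; have := s2_sq; rw [h] at this; simp at this

lemma decompX : ((2:ℂ) • (!![0, 1; 1, 0] : Matrix (Fin 2) (Fin 2) ℂ)) =
    !![1,1;1,-1] * Matrix.diagonal ![2,-2] * !![1/2,1/2;1/2,-1/2] := by
  have : (Matrix.diagonal ![2,-2] : Matrix (Fin 2) (Fin 2) ℂ) = !![2,0;0,-2] := by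
    ext i j; fin_cases i <;> fin_cases j <;> simp [Matrix.diagonal]
  rw [this]
  norm_num [Matrix.mul_fin_two, Matrix.smul_of]

lemma decompY : ((2:ℂ) • (!![0, -Complex.I; Complex.I, 0] : Matrix (Fin 2) (Fin 2) ℂ)) =
    !![1,1;Complex.I,-Complex.I] * Matrix.diagonal ![2,-2] * !![1/2,-Complex.I/2;1/2,Complex.I/2] := by
  have : (Matrix.diagonal ![2,-2] : Matrix (Fin 2) (Fin 2) ℂ) = !![2,0;0,-2] := by
    ext i j; fin_cases i <;> fin_cases j <;> simp [Matrix.diagonal]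
  rw [this]
  norm_num [Matrix.mul_fin_two, Matrix.smul_of]
  refine ⟨by ring, by ring, by ring⟩

lemma decompXY : ((!![0, 1; 1, 0] : Matrix (Fin 2) (Fin 2) ℂ) + !![0, -Complex.I; Complex.I, 0]) =
    !![1-Complex.I,1-Complex.I;s2,-s2] * Matrix.diagonal ![s2,-s2] *
      !![(1+Complex.I)/4, 1/(2*s2); (1+Complex.I)/4, -(1/(2*s2))] := by
  have : (Matrix.diagonal ![s2,-s2] : Matrix (Fin 2) (Fin 2) ℂ) = !![s2,0;0,-s2] := by
    ext i j; fin_cases i <;> fin_cases j <;> simp [Matrix.diagonal]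
  rw [this]
  ext i j
  fin_cases i <;> fin_cases j <;>
    field_simp [Matrix.mul_fin_two, Matrix.add_apply, s2_ne] <;> ring_nf <;>
    simp [s2_pow] <;> ring_nf <;> simp [s2_ne, s2_pow] <;> ring_nf

lemma PQx : (!![1,1;1,-1] : Matrix (Fin 2) (Fin 2) ℂ) * !![1/2,1/2;1/2,-1/2] = 1 ∧
    (!![1/2,1/2;1/2,-1/2] : Matrix (Fin 2) (Fin 2) ℂ) * !![1,1;1,-1] = 1 := by
  constructor <;> (norm_num [Matrix.mul_fin_two]; ext i j; fin_cases i <;> fin_cases j <;> simp <;> norm_num)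

lemma PQy : (!![1,1;Complex.I,-Complex.I] : Matrix (Fin 2) (Fin 2) ℂ) * !![1/2,-Complex.I/2;1/2,Complex.I/2] = 1 ∧
    (!![1/2,-Complex.I/2;1/2,Complex.I/2] : Matrix (Fin 2) (Fin 2) ℂ) * !![1,1;Complex.I,-Complex.I] = 1 := by
  constructor <;> (ext i j; fin_cases i <;> fin_cases j <;>
    simp [Matrix.mul_apply, Fin.sum_univ_two] <;> ring_nf <;> simp [Complex.I_sq] <;> ring)

lemma PQxy : (!![1-Complex.I,1-Complex.I;s2,-s2] : Matrix (Fin 2) (Fin 2) ℂ) *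
      !![(1+Complex.I)/4, 1/(2*s2); (1+Complex.I)/4, -(1/(2*s2))] = 1 ∧
    (!![(1+Complex.I)/4, 1/(2*s2); (1+Complex.I)/4, -(1/(2*s2))] : Matrix (Fin 2) (Fin 2) ℂ) *
      !![1-Complex.I,1-Complex.I;s2,-s2] = 1 := by
  constructor <;> (ext i j; fin_cases i <;> fin_cases j <;>
    field_simp [Matrix.mul_apply, Fin.sum_univ_two, s2_ne] <;> ring_nf <;>
    simp [s2_pow, Complex.I_sq] <;> ring_nf <;> simp [s2_ne, Complex.I_sq] <;> ring_nf)

lemma exp_conj_diag (P Q : Matrix (Fin 2) (Fin 2) ℂ) (d : Fin 2 → ℂ)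
    (hPQ : P * Q = 1) (hQP : Q * P = 1) :
    exp (P * Matrix.diagonal d * Q) = P * Matrix.diagonal (fun i => Complex.exp (d i)) * Q := by
  let U : (Matrix (Fin 2) (Fin 2) ℂ)ˣ := ⟨P, Q, hPQ, hQP⟩
  have h2 : ((U⁻¹ : (Matrix (Fin 2) (Fin 2) ℂ)ˣ) : Matrix (Fin 2) (Fin 2) ℂ) = Q := rfl
  have := Matrix.exp_units_conj U (Matrix.diagonal d)
  rw [h2, show (U : Matrix (Fin 2) (Fin 2) ℂ) = P from rfl] at this
  rw [this, Matrix.exp_diagonal]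
  congr 1
  ext i
  simp [Complex.exp_eq_exp_ℂ]

noncomputable def ψ0 : Fin 2 → ℂ := ![((1 / Real.sqrt 2 : ℝ) : ℂ), (-(1 / Real.sqrt 2 : ℝ) : ℂ)]

lemma a_sq : ((1 / Real.sqrt 2 : ℝ) : ℂ) * ((1 / Real.sqrt 2 : ℝ) : ℂ) = 1/2 := by
  have : (1/Real.sqrt 2) * (1/Real.sqrt 2) = (1/2 : ℝ) := by
    rw [div_mul_div_comm, Real.mul_self_sqrt (by norm_num : (0:ℝ) ≤ 2)]; norm_num
  calc ((1 / Real.sqrt 2 : ℝ) : ℂ) * ((1 / Real.sqrt 2 : ℝ) : ℂ) = ((1/Real.sqrt 2 * (1/Real.sqrt 2) : ℝ) : ℂ) := by push_cast; ring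
    _ = 1/2 := by rw [this]; norm_num

lemma diag_e (u v : ℂ) : (Matrix.diagonal (fun i => Complex.exp (![u,v] i)) : Matrix (Fin 2) (Fin 2) ℂ)
    = !![Complex.exp u, 0; 0, Complex.exp v] := by
  ext i j; fin_cases i <;> fin_cases j <;> simp [Matrix.diagonal]

lemma E1 : star ψ0 ⬝ᵥ (exp ((2:ℂ) • (!![0, 1; 1, 0] : Matrix (Fin 2) (Fin 2) ℂ)) *ᵥ ψ0)
    = Complex.exp (-2) := by
  rw [decompX, exp_conj_diag _ _ _ PQx.1 PQx.2, diag_e]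
  simp [ψ0, dotProduct, Matrix.mulVec, Matrix.mul_apply, Fin.sum_univ_two]
  ring_nf
  rw [show ((Real.sqrt 2)⁻¹ : ℂ)^2 = ((1 / Real.sqrt 2 : ℝ) : ℂ) * ((1 / Real.sqrt 2 : ℝ) : ℂ) by push_cast; ring]
  rw [a_sq]
  ring

lemma E2 : star ψ0 ⬝ᵥ (exp ((2:ℂ) • (!![0, -Complex.I; Complex.I, 0] : Matrix (Fin 2) (Fin 2) ℂ)) *ᵥ ψ0)
    = (Complex.exp 2 + Complex.exp (-2)) / 2 := by
  rw [decompY, exp_conj_diag _ _ _ PQy.1 PQy.2, diag_e]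
  simp [ψ0, dotProduct, Matrix.mulVec, Matrix.mul_apply, Fin.sum_univ_two]
  ring_nf
  rw [show ((Real.sqrt 2)⁻¹ : ℂ)^2 = ((1 / Real.sqrt 2 : ℝ) : ℂ) * ((1 / Real.sqrt 2 : ℝ) : ℂ) by push_cast; ring]
  rw [a_sq]
  ring_nf
  simp [Complex.I_sq]
  ring

lemma s2_inv : s2⁻¹ = s2 / 2 := by
  field_simp [s2_ne]; exact s2_pow.symm

lemma E3 : star ψ0 ⬝ᵥ (exp ((!![0, 1; 1, 0] : Matrix (Fin 2) (Fin 2) ℂ) + !![0, -Complex.I; Complex.I, 0]) *ᵥ ψ0)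
    = (Complex.exp s2 + Complex.exp (-s2)) / 2 - (Complex.exp s2 - Complex.exp (-s2)) / (2 * s2) := by
  rw [decompXY, exp_conj_diag _ _ _ PQxy.1 PQxy.2, diag_e]
  simp [ψ0, dotProduct, Matrix.mulVec, Matrix.mul_apply, Fin.sum_univ_two]
  simp only [show ((Real.sqrt 2 : ℝ) : ℂ) = s2 from rfl]
  rw [div_eq_mul_inv, div_eq_mul_inv, div_eq_mul_inv]
  simp only [mul_inv, s2_inv]
  ring_nf
  simp [s2_pow, Complex.I_sq]
  ring_nf
  rw [show s2^3 = 2*s2 by rw [pow_succ, s2_pow], show s2^4 = 4 by rw [show (4:ℕ)=2+2 from rfl, pow_add, s2_pow]; norm_num]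
  ring

lemma exp_sqrt2_ge : (4:ℝ) ≤ Real.exp (Real.sqrt 2) := by
  have ht : (1.4:ℝ) ≤ Real.sqrt 2 := by
    nlinarith [Real.sq_sqrt (by norm_num : (0:ℝ) ≤ 2), Real.sqrt_nonneg 2]
  have h05 : (1.05:ℝ) ≤ Real.exp 0.05 := by linarith [Real.add_one_le_exp (0.05:ℝ)]
  have h04 : Real.exp (0.4:ℝ) = Real.exp 0.05 ^ (8:ℕ) := by
    rw [← Real.exp_nat_mul]; norm_num
  have hp : (1.05:ℝ)^(8:ℕ) ≤ Real.exp 0.05 ^ (8:ℕ) := by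
    exact pow_le_pow_left₀ (by norm_num) h05 8
  have h14 : Real.exp (1.4:ℝ) = Real.exp 1 * Real.exp 0.4 := by
    rw [← Real.exp_add]; norm_num
  have he1 := Real.exp_one_gt_d9
  have : (4:ℝ) ≤ Real.exp 1.4 := by
    rw [h14, h04]; nlinarith [Real.exp_pos (0.05:ℝ)]
  calc (4:ℝ) ≤ Real.exp 1.4 := this
    _ ≤ Real.exp (Real.sqrt 2) := Real.exp_le_exp.mpr ht

lemma exp_sqrt2_le : Real.exp (Real.sqrt 2) ≤ 5 := by
  have ht : Real.sqrt 2 ≤ (1.5:ℝ) := by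
    nlinarith [Real.sq_sqrt (by norm_num : (0:ℝ) ≤ 2), Real.sqrt_nonneg 2]
  have h3 : Real.exp (3:ℝ) = Real.exp 1 ^ (3:ℕ) := by
    rw [← Real.exp_nat_mul]; norm_num
  have h15 : Real.exp (1.5:ℝ) ^ 2 = Real.exp 3 := by
    rw [sq, ← Real.exp_add]; norm_num
  have he1 := Real.exp_one_lt_d9
  have hc : Real.exp 1 ^ (3:ℕ) < 2.7182818286 ^ (3:ℕ) :=
    pow_lt_pow_left₀ he1 (le_of_lt (Real.exp_pos 1)) (by norm_num)
  have h5 : Real.exp (1.5:ℝ) ≤ 5 := by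
    nlinarith [Real.exp_pos (1.5:ℝ)]
  calc Real.exp (Real.sqrt 2) ≤ Real.exp 1.5 := Real.exp_le_exp.mpr ht
    _ ≤ 5 := h5

lemma exp_neg4_le : Real.exp (-4:ℝ) ≤ 1/50 := by
  have h4 : Real.exp (4:ℝ) = Real.exp 1 ^ (4:ℕ) := by
    rw [← Real.exp_nat_mul]; norm_num
  have he1 := Real.exp_one_gt_d9
  have hinv : Real.exp (-4:ℝ) * Real.exp 4 = 1 := by
    rw [← Real.exp_add]; norm_num
  have hc : (2.7182818283:ℝ) ^ (4:ℕ) < Real.exp 1 ^ (4:ℕ) :=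
    pow_lt_pow_left₀ he1 (by norm_num) (by norm_num)
  nlinarith [Real.exp_pos (-4:ℝ)]

lemma final_ineq : Real.exp (-2) * ((Real.exp 2 + Real.exp (-2))/2) <
    ((Real.exp (Real.sqrt 2) + Real.exp (-Real.sqrt 2))/2 -
      (Real.exp (Real.sqrt 2) - Real.exp (-Real.sqrt 2))/(2*Real.sqrt 2))^2 := by
  set t := Real.sqrt 2 with hts
  set x := Real.exp t with hxs
  set y := Real.exp (-t) with hys
  have ht2 : t^2 = 2 := Real.sq_sqrt (by norm_num)
  have ht0 : 0 ≤ t := Real.sqrt_nonneg 2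
  have htl : (1.41:ℝ) ≤ t := by nlinarith
  have htu : t ≤ (1.42:ℝ) := by nlinarith
  have hxy : x * y = 1 := by rw [hxs, hys, ← Real.exp_add]; simp
  have hx4 : (4:ℝ) ≤ x := exp_sqrt2_ge
  have hx5 : x ≤ 5 := exp_sqrt2_le
  have hy0 : 0 < y := Real.exp_pos _
  have hy5 : (1/5:ℝ) ≤ y := by nlinarith
  have hm2 : Real.exp (-2) * Real.exp 2 = 1 := by rw [← Real.exp_add]; norm_num
  have hm4 : Real.exp (-2) * Real.exp (-2) = Real.exp (-4) := by rw [← Real.exp_add]; norm_num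
  have h50 := exp_neg4_le
  have hLHS : Real.exp (-2) * ((Real.exp 2 + Real.exp (-2))/2) ≤ (1 + Real.exp (-4))/2 := by
    nlinarith [Real.exp_pos (-2:ℝ)]
  have key : (x+y)/2 - (x-y)/(2*t) = ((x+y)*t - (x-y))/(2*t) := by
    field_simp
  have hN : (2.122:ℝ) ≤ (x+y)*t - (x-y) := by
    nlinarith [mul_nonneg (by linarith : (0:ℝ) ≤ x-4) (by linarith : (0:ℝ) ≤ t-1.41),
      mul_nonneg (by linarith : (0:ℝ) ≤ y-1/5) (by linarith : (0:ℝ) ≤ t-1.41)]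
  rw [key, div_pow]
  have hden : (2*t)^2 = 8 := by nlinarith
  rw [hden]
  nlinarith


/-- Quantum violation of the "classical" uncertainty relation: for the qubit state
`ψ = (|+⟩ − |−⟩)/√2` (i.e. `θ = π/2, φ = π`), one has
`⟨e^{2σx}⟩⟨e^{2σy}⟩ < |⟨e^{σx+σy}⟩|²`. -/
theorem stmt_14 (ψ : Fin 2 → ℂ)
    (hψ : ψ = ![((1 / Real.sqrt 2 : ℝ) : ℂ), (-(1 / Real.sqrt 2 : ℝ) : ℂ)])
    (σx σy : Matrix (Fin 2) (Fin 2) ℂ)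
    (hσx : σx = !![0, 1; 1, 0]) (hσy : σy = !![0, -Complex.I; Complex.I, 0]) :
    (star ψ ⬝ᵥ (exp ((2 : ℂ) • σx) *ᵥ ψ)).re * (star ψ ⬝ᵥ (exp ((2 : ℂ) • σy) *ᵥ ψ)).re <
      ‖star ψ ⬝ᵥ (exp (σx + σy) *ᵥ ψ)‖ ^ 2 := by
  have hψ0 : ψ = ψ0 := hψ
  rw [hψ0, hσx, hσy, E1, E2, E3]
  have c1 : Complex.exp (-2 : ℂ) = ((Real.exp (-2) : ℝ) : ℂ) := by
    rw [Complex.ofReal_exp]; norm_num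
  have c2 : Complex.exp (2 : ℂ) = ((Real.exp 2 : ℝ) : ℂ) := by
    rw [Complex.ofReal_exp]; norm_num
  have c3 : Complex.exp s2 = ((Real.exp (Real.sqrt 2) : ℝ) : ℂ) := by
    rw [Complex.ofReal_exp]; rfl
  have c4 : Complex.exp (-s2) = ((Real.exp (-Real.sqrt 2) : ℝ) : ℂ) := by
    rw [Complex.ofReal_exp]; push_cast; rfl
  have c5 : ((Complex.exp s2 + Complex.exp (-s2)) / 2 - (Complex.exp s2 - Complex.exp (-s2)) / (2 * s2))
      = (((Real.exp (Real.sqrt 2) + Real.exp (-Real.sqrt 2))/2 -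
          (Real.exp (Real.sqrt 2) - Real.exp (-Real.sqrt 2))/(2*Real.sqrt 2) : ℝ) : ℂ) := by
    rw [c3, c4]
    unfold s2
    push_cast
    ring
  rw [c1, c2, c5, Complex.norm_real, Real.norm_eq_abs, sq_abs]
  rw [show (((Real.exp 2 :ℝ):ℂ) + ((Real.exp (-2):ℝ):ℂ)) / 2 = (((Real.exp 2 + Real.exp (-2))/2 : ℝ) : ℂ) by push_cast; ring]
  rw [Complex.ofReal_re, Complex.ofReal_re]
  exact final_ineq
end

section
/- For the two-qubit Werner state ρ_w = ((1−η)/4)·I⊗I + η|ψ₃⟩⟨ψ₃| and the CHSH-type operator S = σ_z⊗Y − σ_z⊗Y' + σ_x⊗Y + σ_x⊗Y' with Y = sinθ·σ_x + cosθ·σ_z, Y' = cosθ·σ_x − sinθ·σ_z, the third cumulant satisfies κ₃(S) = −8η(cosθ + sinθ)[−1 − 3η + 2η²(cosθ + sinθ)²], where κ₃(S) = Tr(ρ_w S³) − 3Tr(ρ_w S²)Tr(ρ_w S) + 2(Tr(ρ_w S))³. -/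
/-!
Write `⟨M⟩` for the singlet expectation. Every moment splits as
`Tr(ρ_w Sᵏ) = (1 - η)/4 · Tr Sᵏ + η ⟨Sᵏ⟩`. Landau's identity turns `S²` into the
`θ`-independent operator `4 + 4 J ⊗ J`, where `J = σ_x σ_z`; since `det J = 1` the singlet is fixed
by `J ⊗ J`, and all Pauli traces that occur vanish. Hence the first three moments are
`η e`, `4 + 4η` and `8η e` with `e = ⟨S⟩ = -2 (cos θ + sin θ)`, and the cumulant identity is
polynomial in `η` and `e`.
-/

open Matrix Kronecker

namespace Matrix

variable {R l m n p : Type*}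

theorem kronecker_sub [Ring R] (A : Matrix l m R) (B₁ B₂ : Matrix n p R) :
    A ⊗ₖ (B₁ - B₂) = A ⊗ₖ B₁ - A ⊗ₖ B₂ := by
  ext; simp [mul_sub]

theorem sub_kronecker [Ring R] (A₁ A₂ : Matrix l m R) (B : Matrix n p R) :
    (A₁ - A₂) ⊗ₖ B = A₁ ⊗ₖ B - A₂ ⊗ₖ B := by
  ext; simp [sub_mul]

theorem trace_smul_one_add_smul_vecMulVec_mul [Fintype n] [DecidableEq n] [CommSemiring R]
    [StarRing R] (a b : R) (ψ : n → R) (M : Matrix n n R) :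
    trace ((a • 1 + b • vecMulVec ψ (star ψ)) * M) = a * trace M + b * (star ψ ⬝ᵥ M *ᵥ ψ) := by
  rw [add_mul, trace_add, smul_mul_assoc, smul_mul_assoc, trace_smul, trace_smul, one_mul,
    vecMulVec_mul, trace_vecMulVec, dotProduct_mulVec, dotProduct_comm, smul_eq_mul, smul_eq_mul]

/-- Landau's identity for CHSH operators built from involutions. -/
theorem chsh_mul_self [CommRing R] [Fintype m] [DecidableEq m] [Fintype n] [DecidableEq n]
    {A A' : Matrix m m R} {B B' : Matrix n n R} (hA : A * A = 1) (hA' : A' * A' = 1)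
    (hB : B * B = 1) (hB' : B' * B' = 1) :
    (A ⊗ₖ (B - B') + A' ⊗ₖ (B + B')) * (A ⊗ₖ (B - B') + A' ⊗ₖ (B + B')) =
      (4 : R) • 1 + (A * A' - A' * A) ⊗ₖ (B * B' - B' * B) := by
  simp only [add_mul, mul_add, ← mul_kronecker_mul, hA, hA', sub_mul, mul_sub, hB, hB',
    kronecker_sub, sub_kronecker, kronecker_add, one_kronecker_one]
  module

end Matrix

section AnticommutingInvolutions

variable {R A : Type*} [CommRing R] [Ring A] [Algebra R A] {X Z : A}

theorem smul_add_smul_mul_self (hX : X * X = 1) (hZ : Z * Z = 1) (hXZ : Z * X = -(X * Z))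
    (a b : R) : (a • X + b • Z) * (a • X + b • Z) = (a ^ 2 + b ^ 2) • 1 := by
  simp only [add_mul, mul_add, smul_mul_smul_comm, hX, hZ, hXZ]
  module

theorem smul_sub_smul_mul_self (hX : X * X = 1) (hZ : Z * Z = 1) (hXZ : Z * X = -(X * Z))
    (a b : R) : (a • X - b • Z) * (a • X - b • Z) = (a ^ 2 + b ^ 2) • 1 := by
  simpa [sub_eq_add_neg, ← neg_smul] using smul_add_smul_mul_self hX hZ hXZ a (-b)

theorem commutator_smul_add_smul_smul_sub_smul (hX : X * X = 1) (hZ : Z * Z = 1)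
    (hXZ : Z * X = -(X * Z)) (a b : R) :
    (a • X + b • Z) * (b • X - a • Z) - (b • X - a • Z) * (a • X + b • Z) =
      (-2 * (a ^ 2 + b ^ 2)) • (X * Z) := by
  simp only [add_mul, mul_add, sub_mul, mul_sub, smul_mul_smul_comm, hX, hZ, hXZ]
  module

end AnticommutingInvolutions

noncomputable section

def pauliX : Matrix (Fin 2) (Fin 2) ℂ := !![0, 1; 1, 0]

def pauliZ : Matrix (Fin 2) (Fin 2) ℂ := !![1, 0; 0, -1]

def chshY (θ : ℝ) : Matrix (Fin 2) (Fin 2) ℂ :=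
  ((Real.sin θ : ℝ) : ℂ) • pauliX + ((Real.cos θ : ℝ) : ℂ) • pauliZ

def chshY' (θ : ℝ) : Matrix (Fin 2) (Fin 2) ℂ :=
  ((Real.cos θ : ℝ) : ℂ) • pauliX - ((Real.sin θ : ℝ) : ℂ) • pauliZ

def chshOp (θ : ℝ) : Matrix (Fin 2 × Fin 2) (Fin 2 × Fin 2) ℂ :=
  pauliZ ⊗ₖ (chshY θ - chshY' θ) + pauliX ⊗ₖ (chshY θ + chshY' θ)

def singlet : Fin 2 × Fin 2 → ℂ := fun p =>
  if p = ((0 : Fin 2), (1 : Fin 2)) then ((1 / Real.sqrt 2 : ℝ) : ℂ)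
  else if p = ((1 : Fin 2), (0 : Fin 2)) then (-(1 / Real.sqrt 2 : ℝ) : ℂ) else 0

end

theorem pauliX_mul_self : pauliX * pauliX = 1 := by
  simp [pauliX, one_fin_two]

theorem pauliZ_mul_self : pauliZ * pauliZ = 1 := by
  simp [pauliZ, one_fin_two]

theorem pauliZ_mul_pauliX : pauliZ * pauliX = -(pauliX * pauliZ) := by
  simp [pauliX, pauliZ]

theorem chshOp_mul_self (θ : ℝ) :
    chshOp θ * chshOp θ = (4 : ℂ) • 1 + (4 : ℂ) • ((pauliX * pauliZ) ⊗ₖ (pauliX * pauliZ)) := by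
  have hsc : ((Real.sin θ : ℝ) : ℂ) ^ 2 + ((Real.cos θ : ℝ) : ℂ) ^ 2 = 1 := by
    exact_mod_cast Real.sin_sq_add_cos_sq θ
  have hY : chshY θ * chshY θ = 1 := by
    rw [chshY, smul_add_smul_mul_self pauliX_mul_self pauliZ_mul_self pauliZ_mul_pauliX, hsc,
      one_smul]
  have hY' : chshY' θ * chshY' θ = 1 := by
    rw [chshY', smul_sub_smul_mul_self pauliX_mul_self pauliZ_mul_self pauliZ_mul_pauliX,
      add_comm, hsc, one_smul]
  have hZX : pauliZ * pauliX - pauliX * pauliZ = (-2 : ℂ) • (pauliX * pauliZ) := by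
    rw [pauliZ_mul_pauliX]; module
  have hYY' : chshY θ * chshY' θ - chshY' θ * chshY θ = (-2 : ℂ) • (pauliX * pauliZ) := by
    rw [chshY, chshY', commutator_smul_add_smul_smul_sub_smul pauliX_mul_self pauliZ_mul_self
      pauliZ_mul_pauliX, hsc, mul_one]
  rw [chshOp, chsh_mul_self pauliZ_mul_self pauliX_mul_self hY hY', hZX, hYY', smul_kronecker,
    kronecker_smul, smul_smul]
  norm_num

theorem chshOp_mul_self_mul_self (θ : ℝ) :
    chshOp θ * chshOp θ * chshOp θ =
      (4 : ℂ) • chshOp θ + (4 : ℂ) • (chshOp θ * (pauliX * pauliZ) ⊗ₖ (pauliX * pauliZ)) := by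
  rw [mul_assoc, chshOp_mul_self, mul_add, mul_smul_comm, mul_smul_comm, mul_one]

theorem trace_chshOp (θ : ℝ) : trace (chshOp θ) = 0 := by
  simp [chshOp, trace_kronecker, pauliX, pauliZ, trace_fin_two]

theorem trace_chshOp_mul_self (θ : ℝ) : trace (chshOp θ * chshOp θ) = 16 := by
  rw [chshOp_mul_self]
  simp [trace_kronecker, pauliX, pauliZ, trace_fin_two]
  norm_num

theorem trace_chshOp_mul_self_mul_self (θ : ℝ) :
    trace (chshOp θ * chshOp θ * chshOp θ) = 0 := by
  rw [chshOp_mul_self_mul_self, trace_add, trace_smul, trace_smul, trace_chshOp, chshOp, add_mul,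
    ← mul_kronecker_mul, ← mul_kronecker_mul, trace_add, trace_kronecker, trace_kronecker]
  simp [pauliX, pauliZ, trace_fin_two]

theorem inv_sqrt_two_mul_self :
    ((Real.sqrt 2 : ℝ) : ℂ)⁻¹ * ((Real.sqrt 2 : ℝ) : ℂ)⁻¹ = 1 / 2 := by
  rw [← mul_inv, ← Complex.ofReal_mul, Real.mul_self_sqrt zero_le_two]
  norm_num

theorem star_singlet_dotProduct_singlet : star singlet ⬝ᵥ singlet = 1 := by
  simp [dotProduct, Fintype.sum_prod_type, singlet]
  linear_combination 2 * inv_sqrt_two_mul_self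

theorem kronecker_self_mulVec_singlet (U : Matrix (Fin 2) (Fin 2) ℂ) :
    (U ⊗ₖ U) *ᵥ singlet = U.det • singlet := by
  ext ⟨i, j⟩
  fin_cases i <;> fin_cases j <;>
    simp [mulVec, dotProduct, Fintype.sum_prod_type, det_fin_two, singlet] <;> ring

theorem kronecker_pauliX_mul_pauliZ_mulVec_singlet :
    ((pauliX * pauliZ) ⊗ₖ (pauliX * pauliZ)) *ᵥ singlet = singlet := by
  rw [kronecker_self_mulVec_singlet, det_mul]
  simp [pauliX, pauliZ, det_fin_two]

theorem singlet_expect_chshOp (θ : ℝ) :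
    star singlet ⬝ᵥ chshOp θ *ᵥ singlet = ((-2 * (Real.cos θ + Real.sin θ) : ℝ) : ℂ) := by
  simp [dotProduct, mulVec, Fintype.sum_prod_type, singlet, chshOp, chshY, chshY', pauliX, pauliZ]
  linear_combination (-4 * (Complex.cos θ + Complex.sin θ)) * inv_sqrt_two_mul_self

theorem singlet_expect_chshOp_mul_self (θ : ℝ) :
    star singlet ⬝ᵥ (chshOp θ * chshOp θ) *ᵥ singlet = 8 := by
  rw [chshOp_mul_self, add_mulVec, smul_mulVec, smul_mulVec, one_mulVec,
    kronecker_pauliX_mul_pauliZ_mulVec_singlet, dotProduct_add, dotProduct_smul,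
    star_singlet_dotProduct_singlet]
  norm_num

theorem singlet_expect_chshOp_mul_self_mul_self (θ : ℝ) :
    star singlet ⬝ᵥ (chshOp θ * chshOp θ * chshOp θ) *ᵥ singlet =
      ((-16 * (Real.cos θ + Real.sin θ) : ℝ) : ℂ) := by
  rw [chshOp_mul_self_mul_self, add_mulVec, smul_mulVec, smul_mulVec, ← mulVec_mulVec,
    kronecker_pauliX_mul_pauliZ_mulVec_singlet, dotProduct_add, dotProduct_smul,
    singlet_expect_chshOp]
  push_cast
  ring

theorem stmt_17_general (η θ : ℝ)
    (ψ₃ : Fin 2 × Fin 2 → ℂ)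
    (hψ₃ : ψ₃ = fun p => if p = ((0 : Fin 2), (1 : Fin 2)) then ((1 / Real.sqrt 2 : ℝ) : ℂ)
      else if p = ((1 : Fin 2), (0 : Fin 2)) then (-(1 / Real.sqrt 2 : ℝ) : ℂ) else 0)
    (σx σz : Matrix (Fin 2) (Fin 2) ℂ)
    (hσx : σx = !![0, 1; 1, 0]) (hσz : σz = !![1, 0; 0, -1])
    (Ym Ym' : Matrix (Fin 2) (Fin 2) ℂ)
    (hYm : Ym = ((Real.sin θ : ℝ) : ℂ) • σx + ((Real.cos θ : ℝ) : ℂ) • σz)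
    (hYm' : Ym' = ((Real.cos θ : ℝ) : ℂ) • σx - ((Real.sin θ : ℝ) : ℂ) • σz)
    (S : Matrix (Fin 2 × Fin 2) (Fin 2 × Fin 2) ℂ)
    (hS : S = σz ⊗ₖ Ym - σz ⊗ₖ Ym' + σx ⊗ₖ Ym + σx ⊗ₖ Ym')
    (ρw : Matrix (Fin 2 × Fin 2) (Fin 2 × Fin 2) ℂ)
    (hρw : ρw = (((1 - η) / 4 : ℝ) : ℂ) • (1 : Matrix (Fin 2 × Fin 2) (Fin 2 × Fin 2) ℂ) +
      ((η : ℝ) : ℂ) • vecMulVec ψ₃ (star ψ₃)) :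
    (ρw * (S * S * S)).trace - 3 * (ρw * (S * S)).trace * (ρw * S).trace +
        2 * ((ρw * S).trace) ^ 3 =
      ((-8 * η * (Real.cos θ + Real.sin θ) *
        (-1 - 3 * η + 2 * η ^ 2 * (Real.cos θ + Real.sin θ) ^ 2) : ℝ) : ℂ) := by
  obtain rfl : ψ₃ = singlet := hψ₃
  obtain rfl : S = chshOp θ := by
    rw [hS, chshOp, chshY, chshY', pauliX, pauliZ, ← hσx, ← hσz, ← hYm, ← hYm', kronecker_sub,
      kronecker_add]
    abel
  rw [hρw, trace_smul_one_add_smul_vecMulVec_mul, trace_smul_one_add_smul_vecMulVec_mul,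
    trace_smul_one_add_smul_vecMulVec_mul, trace_chshOp, trace_chshOp_mul_self,
    trace_chshOp_mul_self_mul_self, singlet_expect_chshOp, singlet_expect_chshOp_mul_self,
    singlet_expect_chshOp_mul_self_mul_self]
  push_cast
  ring

/-- Third cumulant of the CHSH-type operator `S` in the two-qubit Werner state:
`κ₃(S) = −8η(cosθ+sinθ)[−1 − 3η + 2η²(cosθ+sinθ)²]`. -/
theorem stmt_17 (η θ : ℝ) (hη : η ∈ Set.Icc (-(1 / 3) : ℝ) 1)
    (ψ₃ : Fin 2 × Fin 2 → ℂ)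
    (hψ₃ : ψ₃ = fun p => if p = ((0 : Fin 2), (1 : Fin 2)) then ((1 / Real.sqrt 2 : ℝ) : ℂ)
      else if p = ((1 : Fin 2), (0 : Fin 2)) then (-(1 / Real.sqrt 2 : ℝ) : ℂ) else 0)
    (σx σz : Matrix (Fin 2) (Fin 2) ℂ)
    (hσx : σx = !![0, 1; 1, 0]) (hσz : σz = !![1, 0; 0, -1])
    (Ym Ym' : Matrix (Fin 2) (Fin 2) ℂ)
    (hYm : Ym = ((Real.sin θ : ℝ) : ℂ) • σx + ((Real.cos θ : ℝ) : ℂ) • σz)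
    (hYm' : Ym' = ((Real.cos θ : ℝ) : ℂ) • σx - ((Real.sin θ : ℝ) : ℂ) • σz)
    (S : Matrix (Fin 2 × Fin 2) (Fin 2 × Fin 2) ℂ)
    (hS : S = σz ⊗ₖ Ym - σz ⊗ₖ Ym' + σx ⊗ₖ Ym + σx ⊗ₖ Ym')
    (ρw : Matrix (Fin 2 × Fin 2) (Fin 2 × Fin 2) ℂ)
    (hρw : ρw = (((1 - η) / 4 : ℝ) : ℂ) • (1 : Matrix (Fin 2 × Fin 2) (Fin 2 × Fin 2) ℂ) +
      ((η : ℝ) : ℂ) • vecMulVec ψ₃ (star ψ₃)) :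
    (ρw * (S * S * S)).trace - 3 * (ρw * (S * S)).trace * (ρw * S).trace +
        2 * ((ρw * S).trace) ^ 3 =
      ((-8 * η * (Real.cos θ + Real.sin θ) *
        (-1 - 3 * η + 2 * η ^ 2 * (Real.cos θ + Real.sin θ) ^ 2) : ℝ) : ℂ) :=
  stmt_17_general η θ ψ₃ hψ₃ σx σz hσx hσz Ym Ym' hYm hYm' S hS ρw hρw
end

section
/- For the singlet state (η = 1 in the Werner family) the maximum over θ of |κ₃(S)| = |−8(cosθ+sinθ)(−4 + 2(cosθ+sinθ)²)| equals 64√6/9, which exceeds 8 (the bound for any classical random variable with values in [−2,2]). -/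
/-!
With `u = cos θ + sin θ = √2 sin (θ + π/4)`, which ranges over `[-√2, √2]`, the quantity is
`16 |u (2 - u²)|`. Writing `t = u²`, the identity
`32/27 - t (2 - t)² = (t - 2/3)² (8/3 - t)` shows `(u (2 - u²))² ≤ 32/27` for `u² ≤ 8/3`, with
equality at `u² = 2/3`; hence the maximum is `16 · √(32/27) = 64√6/9`.
-/

open Real

theorem cos_add_sin_eq_sqrt_two_mul_sin (θ : ℝ) :
    cos θ + sin θ = √2 * sin (θ + π / 4) := by
  have h2 : √2 ^ 2 = 2 := sq_sqrt (by norm_num)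
  rw [sin_add, sin_pi_div_four, cos_pi_div_four]
  linear_combination -(sin θ + cos θ) / 2 * h2

theorem cos_add_sin_sq_le_two (θ : ℝ) : (cos θ + sin θ) ^ 2 ≤ 2 := by
  nlinarith [sin_sq_add_cos_sq θ, sq_nonneg (sin θ - cos θ)]

theorem exists_cos_add_sin_eq {c : ℝ} (hc : c ^ 2 ≤ 2) : ∃ θ, cos θ + sin θ = c := by
  have h2 : (0 : ℝ) < √2 := sqrt_pos.mpr (by norm_num)
  have hc' : |c / √2| ≤ 1 := by
    rw [← sq_le_one_iff_abs_le_one, div_pow, sq_sqrt (by norm_num)]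
    linarith
  refine ⟨arcsin (c / √2) - π / 4, ?_⟩
  rw [cos_add_sin_eq_sqrt_two_mul_sin, sub_add_cancel,
    sin_arcsin (abs_le.mp hc').1 (abs_le.mp hc').2]
  field_simp

theorem abs_mul_two_sub_sq_le {u : ℝ} (hu : u ^ 2 ≤ 8 / 3) :
    |u * (2 - u ^ 2)| ≤ 4 * √6 / 9 := by
  have h6 : √6 ^ 2 = 6 := sq_sqrt (by norm_num)
  refine abs_le_of_sq_le_sq ?_ (by positivity)
  calc (u * (2 - u ^ 2)) ^ 2 = 32 / 27 - (u ^ 2 - 2 / 3) ^ 2 * (8 / 3 - u ^ 2) := by ring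
    _ ≤ 32 / 27 := sub_le_self _ (mul_nonneg (sq_nonneg _) (sub_nonneg.mpr hu))
    _ = (4 * √6 / 9) ^ 2 := by rw [div_pow, mul_pow, h6]; norm_num

/-- For the singlet (`η = 1`), the maximum over `θ` of
`|−8(cosθ+sinθ)(−4 + 2(cosθ+sinθ)²)|` equals `64√6/9`, which exceeds `8`. -/
theorem stmt_18 :
    IsGreatest (Set.range fun θ : ℝ =>
        |(-8) * (Real.cos θ + Real.sin θ) * (-4 + 2 * (Real.cos θ + Real.sin θ) ^ 2)|)
      (64 * Real.sqrt 6 / 9) ∧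
    64 * Real.sqrt 6 / 9 > 8 := by
  have h6 : √6 ^ 2 = 6 := sq_sqrt (by norm_num)
  have hcubic (u : ℝ) : |(-8) * u * (-4 + 2 * u ^ 2)| = 16 * |u * (2 - u ^ 2)| := by
    rw [show (-8) * u * (-4 + 2 * u ^ 2) = 16 * (u * (2 - u ^ 2)) by ring, abs_mul,
      abs_of_pos (by norm_num : (16 : ℝ) > 0)]
  refine ⟨⟨?_, ?_⟩, by nlinarith [sqrt_nonneg 6]⟩
  · have hu : (√6 / 3) ^ 2 = 2 / 3 := by rw [div_pow, h6]; norm_num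
    obtain ⟨θ, hθ⟩ := exists_cos_add_sin_eq (c := √6 / 3) (by rw [hu]; norm_num)
    refine ⟨θ, ?_⟩
    simp only
    rw [hcubic, hθ, hu, abs_of_nonneg (by positivity)]
    ring
  · rintro _ ⟨θ, rfl⟩
    have hbound := abs_mul_two_sub_sq_le ((cos_add_sin_sq_le_two θ).trans (by norm_num))
    simp only [hcubic]
    linarith
end
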